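/- Let X = ∏_{i=1}^n X_i be a product of n finite intervals of integers, each of cardinality at least 2, let F = (f_1,…,f_n) be a map from X to itself, and let Y be a subinterval of X_1. Define F̃ = (f̃_1,…,f̃_n) : X → X by f̃_i = f_i for i > 1 and f̃_1(x) = min(Y) if f_1(x) < min(Y), f̃_1(x) = f_1(x) if f_1(x) ∈ Y, and f̃_1(x) = max(Y) if f_1(x) > max(Y). Then the number of attractors A of Γ(F) that contain a point x with x_1 ∈ Y is at most the total number of attractors of Γ(F̃). -/

import Mathlib

/-! Common definitions for discrete dynamical systems on products of
integer intervals, following Richard, "Positive circuits and maximal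
number of fixed points in discrete dynamical systems". -/

/-- The state space `X = ∏ i, [a i, b i]` as a subset of `Fin n → ℤ`. -/
def StateSpace {n : ℕ} (a b : Fin n → ℤ) : Set (Fin n → ℤ) :=
  {x | ∀ i, a i ≤ x i ∧ x i ≤ b i}

/-- `v` is a directional vector, i.e. `v ∈ {-1,1}^n`. -/
def IsDir {n : ℕ} (v : Fin n → ℤ) : Prop := ∀ i, v i = 1 ∨ v i = -1

/-- `(x, v) ∈ X'`: `x ∈ X`, `v ∈ {-1,1}^n` and `x + v ∈ X`. -/
def InX' {n : ℕ} (a b : Fin n → ℤ) (x v : Fin n → ℤ) : Prop :=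
  x ∈ StateSpace a b ∧ IsDir v ∧ (x + v) ∈ StateSpace a b

/-- Discrete Jacobian entry `f_ij(x,v) = (f_i(x + v_j e_j) - f_i(x)) / v_j`. -/
def jac {n : ℕ} (F : (Fin n → ℤ) → Fin n → ℤ) (x v : Fin n → ℤ) (i j : Fin n) : ℤ :=
  (F (Function.update x j (x j + v j)) i - F x i) / v j

/-- A signed edge `(j, s, i)`: initial vertex `j`, sign `s`, final vertex `i`. -/
abbrev SEdge (n : ℕ) := Fin n × ℤ × Fin n

/-- Edge set of the local interaction graph `𝐆_F(x,v)`: a positive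
(resp. negative) edge from `j` to `i` iff `f_ij(x,v) > 0` (resp. `< 0`). -/
def localGraph {n : ℕ} (F : (Fin n → ℤ) → Fin n → ℤ) (x v : Fin n → ℤ) :
    Set (SEdge n) :=
  {e | (e.2.1 = 1 ∧ 0 < jac F x v e.2.2 e.1) ∨ (e.2.1 = -1 ∧ jac F x v e.2.2 e.1 < 0)}

/-- `p` and `q` are on both sides of `t`. -/
def BothSides (p q t : ℚ) : Prop := (p < t ∧ t < q) ∨ (q < t ∧ t < p)

/-- Edge set of the local interaction graph with thresholds `G_F(x,v)`:
an edge `(j,s,i)` of `𝐆_F(x,v)` such that moreover `f_i(x)` and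
`f_i(x + v_j e_j)` are on both sides of the threshold `x_i + v_i / 2`. -/
def localGraphT {n : ℕ} (F : (Fin n → ℤ) → Fin n → ℤ) (x v : Fin n → ℤ) :
    Set (SEdge n) :=
  {e | e ∈ localGraph F x v ∧
    BothSides (F x e.2.2) (F (Function.update x e.1 (x e.1 + v e.1)) e.2.2)
      ((x e.2.2 : ℚ) + (v e.2.2 : ℚ) / 2)}

/-- `c` is an (elementary) circuit of the signed graph with edge set `E`:
a nonempty sequence of consecutive edges, closing up, whose initial
vertices are mutually distinct. -/
def IsCircuit {n : ℕ} (E : Set (SEdge n)) (c : List (SEdge n)) : Prop :=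
  c ≠ [] ∧ (∀ e ∈ c, e ∈ E) ∧
  (∀ (k : ℕ) (h : k + 1 < c.length),
    (c.get ⟨k, Nat.lt_of_succ_lt h⟩).2.2 = (c.get ⟨k + 1, h⟩).1) ∧
  (c.getLast?).map (fun e => e.2.2) = (c.head?).map (fun e => e.1) ∧
  (c.map (fun e => e.1)).Nodup

/-- A positive circuit: a circuit whose product of signs is positive. -/
def IsPosCircuit {n : ℕ} (E : Set (SEdge n)) (c : List (SEdge n)) : Prop :=
  IsCircuit E c ∧ 0 < (c.map (fun e => e.2.1)).prod

/-- The graph `E` has a positive circuit. -/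
def HasPosCircuit {n : ℕ} (E : Set (SEdge n)) : Prop := ∃ c, IsPosCircuit E c

/-- Vertex `i` belongs to some positive circuit of `E`. -/
def MemPosCircuit {n : ℕ} (E : Set (SEdge n)) (i : Fin n) : Prop :=
  ∃ c, IsPosCircuit E c ∧ i ∈ c.map (fun e => e.1)

/-- `I` is a positive feedback vertex set of `E`: every positive circuit
of `E` has at least one vertex in `I`. -/
def IsPFVS {n : ℕ} (E : Set (SEdge n)) (I : Finset (Fin n)) : Prop :=
  ∀ c, IsPosCircuit E c → ∃ i ∈ I, i ∈ c.map (fun e => e.1)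

/-- `T_i(G_F)`: the set of real numbers `t` such that `t = x_i + v_i/2` for
some `(x,v) ∈ X'` such that `i` belongs to a positive circuit of `G_F(x,v)`. -/
def Tset {n : ℕ} (a b : Fin n → ℤ) (F : (Fin n → ℤ) → Fin n → ℤ) (i : Fin n) : Set ℝ :=
  {t | ∃ x v, InX' a b x v ∧ t = (x i : ℝ) + (v i : ℝ) / 2 ∧
    MemPosCircuit (localGraphT F x v) i}

/-- Edge set of the global interaction graph `𝐆(F)` (without thresholds). -/
def globalGraph {n : ℕ} (a b : Fin n → ℤ) (F : (Fin n → ℤ) → Fin n → ℤ) :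
    Set (SEdge n) :=
  ⋃ (x : Fin n → ℤ) (v : Fin n → ℤ) (_ : InX' a b x v), localGraph F x v

/-- Edge set of the global interaction graph `G(F)` (with thresholds). -/
def globalGraphT {n : ℕ} (a b : Fin n → ℤ) (F : (Fin n → ℤ) → Fin n → ℤ) :
    Set (SEdge n) :=
  ⋃ (x : Fin n → ℤ) (v : Fin n → ℤ) (_ : InX' a b x v), localGraphT F x v

/-- Edge relation of the asynchronous state transition graph `Γ(F)`. -/
def Async {n : ℕ} (F : (Fin n → ℤ) → Fin n → ℤ) (x y : Fin n → ℤ) : Prop :=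
  ∃ i, F x i ≠ x i ∧ y = Function.update x i (x i + (F x i - x i).sign)

/-- A trap domain of `Γ(F)`: a nonempty subset of `X` closed under the
edges of `Γ(F)`. -/
def IsTrapDomain {n : ℕ} (a b : Fin n → ℤ) (F : (Fin n → ℤ) → Fin n → ℤ)
    (A : Set (Fin n → ℤ)) : Prop :=
  A.Nonempty ∧ A ⊆ StateSpace a b ∧ ∀ x ∈ A, ∀ y, Async F x y → y ∈ A

/-- An attractor of `Γ(F)`: a trap domain minimal for inclusion. -/
def IsAttractor {n : ℕ} (a b : Fin n → ℤ) (F : (Fin n → ℤ) → Fin n → ℤ)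
    (A : Set (Fin n → ℤ)) : Prop :=
  IsTrapDomain a b F A ∧ ∀ B, IsTrapDomain a b F B → B ⊆ A → B = A

/-- The map `F̃` obtained from `F` by clamping the first component into
the subinterval `Y = [c, d]` of `X_1`. -/
def clampFirst {n : ℕ} (i0 : Fin n) (c d : ℤ) (F : (Fin n → ℤ) → Fin n → ℤ) :
    (Fin n → ℤ) → Fin n → ℤ :=
  fun x i => if i = i0 then
      (if F x i0 < c then c else if d < F x i0 then d else F x i0)
    else F x i

/-! Clamping the `i0`-th component of `F` into `Y = [c, d]` leaves the other components alone and
moves `x i0` in the same direction as before whenever `x i0 ∈ Y`, without ever leaving `Y`.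
Hence, for an attractor `A` of `Γ(F)` meeting the slab `{x | x i0 ∈ Y}`, the part of `A` in the
slab is a trap domain of `Γ(F̃)` and so contains an attractor of `Γ(F̃)`. Distinct attractors of
`Γ(F)` are disjoint, so this assigns distinct attractors of `Γ(F̃)` to them. -/

lemma Set.ncard_le_ncard_of_forall_exists_subset {α : Type*} {S T : Set (Set α)} (hT : T.Finite)
    (hS : ∀ A ∈ S, ∀ A' ∈ S, (A ∩ A').Nonempty → A = A') (hT_nonempty : ∀ B ∈ T, B.Nonempty)
    (h : ∀ A ∈ S, ∃ B ∈ T, B ⊆ A) : S.ncard ≤ T.ncard := by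
  choose! f hfT hfA using h
  refine Set.ncard_le_ncard_of_injOn f hfT (fun A hA A' hA' hAA' => hS A hA A' hA' ?_) hT
  obtain ⟨x, hx⟩ := hT_nonempty _ (hfT A hA)
  exact ⟨x, hfA A hA hx, hfA A' hA' (hAA' ▸ hx)⟩

lemma clamp_sub_sign {c d x f g : ℤ} (hcx : c ≤ x) (hxd : x ≤ d)
    (hg : g = if f < c then c else if d < f then d else f) (hne : g ≠ x) :
    f ≠ x ∧ (g - x).sign = (f - x).sign ∧ c ≤ x + (g - x).sign ∧ x + (g - x).sign ≤ d := by
  have hgY : c ≤ g ∧ g ≤ d := by split_ifs at hg <;> omega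
  obtain ⟨hgx, hfx⟩ | ⟨hxg, hxf⟩ : g < x ∧ f < x ∨ x < g ∧ x < f := by split_ifs at hg <;> omega
  · rw [Int.sign_eq_neg_one_of_neg (by omega), Int.sign_eq_neg_one_of_neg (by omega)]; omega
  · rw [Int.sign_eq_one_of_pos (by omega), Int.sign_eq_one_of_pos (by omega)]; omega

section AsyncDynamics

variable {n : ℕ} {a b : Fin n → ℤ} {F : (Fin n → ℤ) → Fin n → ℤ}

lemma stateSpace_finite (a b : Fin n → ℤ) : (StateSpace a b).Finite :=
  (Set.Finite.pi fun i => Set.finite_Icc (a i) (b i)).subset fun _ hx i _ => hx i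

lemma isAttractor_iff_minimal {A : Set (Fin n → ℤ)} :
    IsAttractor a b F A ↔ Minimal (IsTrapDomain a b F) A :=
  and_congr_right fun _ => forall₂_congr fun _ _ =>
    ⟨fun h hBA => (h hBA).symm.le, fun h hBA => hBA.antisymm (h hBA)⟩

lemma setOf_isTrapDomain_finite (a b : Fin n → ℤ) (F : (Fin n → ℤ) → Fin n → ℤ) :
    {A | IsTrapDomain a b F A}.Finite :=
  (stateSpace_finite a b).finite_subsets.subset fun _ hA => hA.2.1

lemma setOf_isAttractor_finite (a b : Fin n → ℤ) (F : (Fin n → ℤ) → Fin n → ℤ) :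
    {A | IsAttractor a b F A}.Finite :=
  (setOf_isTrapDomain_finite a b F).subset fun _ hA => hA.1

lemma IsTrapDomain.exists_isAttractor_subset {T : Set (Fin n → ℤ)} (hT : IsTrapDomain a b F T) :
    ∃ A, IsAttractor a b F A ∧ A ⊆ T := by
  obtain ⟨A, hAT, hA⟩ := (setOf_isTrapDomain_finite a b F).isPWO.exists_le_minimal hT
  exact ⟨A, isAttractor_iff_minimal.2 hA, hAT⟩

lemma IsAttractor.eq_of_inter_nonempty {A B : Set (Fin n → ℤ)} (hA : IsAttractor a b F A)
    (hB : IsAttractor a b F B) (hAB : (A ∩ B).Nonempty) : A = B := by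
  have hT : IsTrapDomain a b F (A ∩ B) :=
    ⟨hAB, Set.inter_subset_left.trans hA.1.2.1,
      fun x hx y hxy => ⟨hA.1.2.2 x hx.1 y hxy, hB.1.2.2 x hx.2 y hxy⟩⟩
  rw [← hA.2 _ hT Set.inter_subset_left, hB.2 _ hT Set.inter_subset_right]

lemma async_of_async_clampFirst {i0 : Fin n} {c d : ℤ} {x y : Fin n → ℤ}
    (hx : c ≤ x i0 ∧ x i0 ≤ d) (hxy : Async (clampFirst i0 c d F) x y) :
    Async F x y ∧ c ≤ y i0 ∧ y i0 ≤ d := by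
  obtain ⟨i, hne, rfl⟩ := hxy
  by_cases hi : i = i0
  · subst hi
    simp only [clampFirst, if_pos] at hne ⊢
    obtain ⟨hFne, hsign, hc, hd⟩ := clamp_sub_sign hx.1 hx.2 rfl hne
    exact ⟨⟨i, hFne, by rw [hsign]⟩, by simpa using hc, by simpa using hd⟩
  · simp only [clampFirst, if_neg hi] at hne ⊢
    exact ⟨⟨i, hne, rfl⟩, by simpa [Function.update_of_ne (Ne.symm hi)] using hx⟩

lemma IsTrapDomain.inter_clampFirst {i0 : Fin n} {c d : ℤ} {A : Set (Fin n → ℤ)}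
    (hA : IsTrapDomain a b F A) (hAY : (A ∩ {x | c ≤ x i0 ∧ x i0 ≤ d}).Nonempty) :
    IsTrapDomain a b (clampFirst i0 c d F) (A ∩ {x | c ≤ x i0 ∧ x i0 ≤ d}) := by
  refine ⟨hAY, Set.inter_subset_left.trans hA.2.1, fun x hx y hxy => ?_⟩
  obtain ⟨hFxy, hy⟩ := async_of_async_clampFirst hx.2 hxy
  exact ⟨hA.2.2 x hx.1 y hFxy, hy⟩

end AsyncDynamics

theorem stmt17_general {n : ℕ} (hn : 0 < n) (a b : Fin n → ℤ)
    (F : (Fin n → ℤ) → Fin n → ℤ)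
    (c d : ℤ) :
    {A | IsAttractor a b F A ∧ ∃ x ∈ A, c ≤ x ⟨0, hn⟩ ∧ x ⟨0, hn⟩ ≤ d}.ncard
      ≤ {A | IsAttractor a b (clampFirst ⟨0, hn⟩ c d F) A}.ncard := by
  refine Set.ncard_le_ncard_of_forall_exists_subset (setOf_isAttractor_finite a b _)
    (fun A hA A' hA' => hA.1.eq_of_inter_nonempty hA'.1) (fun B hB => hB.1.1) ?_
  rintro A ⟨hA, x, hxA, hx⟩
  obtain ⟨B, hB, hBA⟩ := (hA.1.inter_clampFirst ⟨x, hxA, hx⟩).exists_isAttractor_subset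
  exact ⟨B, hB, hBA.trans Set.inter_subset_left⟩

/-- The number of attractors of `Γ(F)` meeting `{x | x_1 ∈ Y}` is at most
the number of attractors of `Γ(F̃)`. -/
theorem stmt17 {n : ℕ} (hn : 0 < n) (a b : Fin n → ℤ) (hab : ∀ i, a i + 1 ≤ b i)
    (F : (Fin n → ℤ) → Fin n → ℤ)
    (hF : ∀ x ∈ StateSpace a b, F x ∈ StateSpace a b)
    (c d : ℤ) (hc : a ⟨0, hn⟩ ≤ c) (hcd : c ≤ d) (hd : d ≤ b ⟨0, hn⟩) :
    {A | IsAttractor a b F A ∧ ∃ x ∈ A, c ≤ x ⟨0, hn⟩ ∧ x ⟨0, hn⟩ ≤ d}.ncard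
      ≤ {A | IsAttractor a b (clampFirst ⟨0, hn⟩ c d F) A}.ncard :=
  stmt17_general hn a b F c d
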